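/- arXiv:1105.0875 — 2 statements merged into one kernel-verified Lean document; each statement's English description precedes it below -/
import Mathlib

section
/- Let σ² ≥ 0, n > 0, λ > 0, 0 ≤ λ_j < λ, and β_j ∈ ℝ. Then λ_j·β_j² ≤ 4 · ( (σ²/n)·(λ_j/(λ_j+λ))² + β_j²·λ_j/(1+λ_j/λ)² ). -/
theorem stmt_3 (σ2 : ℝ) (n : ℝ) (lamj lam βj : ℝ)
    (hσ : 0 ≤ σ2) (hn : 0 < n) (hl : 0 < lam) (hj0 : 0 ≤ lamj) (h : lamj < lam) :
    lamj * βj ^ 2 ≤ 4 * ((σ2 / n) * (lamj / (lamj + lam)) ^ 2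
      + βj ^ 2 * lamj / (1 + lamj / lam) ^ 2) := by
  have h1 : (0:ℝ) < 1 + lamj / lam := by positivity
  have h2 : 1 + lamj / lam < 2 := by
    have : lamj / lam < 1 := (div_lt_one hl).2 h
    linarith
  have hsq : (1 + lamj / lam) ^ 2 ≤ 4 := by nlinarith
  have hB : lamj * βj ^ 2 / 4 ≤ βj ^ 2 * lamj / (1 + lamj / lam) ^ 2 := by
    rw [div_le_div_iff₀ (by norm_num) (by positivity)]
    nlinarith [sq_nonneg βj, mul_nonneg hj0 (sq_nonneg βj)]
  have hA : 0 ≤ (σ2 / n) * (lamj / (lamj + lam)) ^ 2 := by positivity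
  linarith
end

section
/- Let p ∈ ℕ, σ² ≥ 0, n > 0, λ ≥ 0, and for j = 1,…,p let λ_j > 0 and β_j ∈ ℝ. Define RiskRidge = Σ_j [ (σ²/n)·(λ_j/(λ_j+λ))² + β_j²·λ_j·λ²/(λ_j+λ)² ] and RiskPCA = Σ_j [ (σ²/n) if λ_j ≥ λ, else λ_j·β_j² ]. Then RiskPCA ≤ 4 · RiskRidge. -/
theorem stmt_4 (p : ℕ) (σ2 n lam : ℝ) (hσ : 0 ≤ σ2) (hn : 0 < n) (hl : 0 ≤ lam)
    (lamv : Fin p → ℝ) (hlam : ∀ j, 0 < lamv j) (β : Fin p → ℝ) :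
    (∑ j, if lam ≤ lamv j then σ2 / n else lamv j * (β j) ^ 2)
      ≤ 4 * ∑ j, ((σ2 / n) * (lamv j / (lamv j + lam)) ^ 2
        + (β j) ^ 2 * lamv j * lam ^ 2 / (lamv j + lam) ^ 2) := by
  rw [Finset.mul_sum]
  apply Finset.sum_le_sum
  intro j _
  have ha := hlam j
  have hs : 0 < lamv j + lam := by linarith
  have hσn : 0 ≤ σ2 / n := div_nonneg hσ hn.le
  have hb : 0 ≤ (β j) ^ 2 := sq_nonneg _
  by_cases h : lam ≤ lamv j
  · simp only [h, if_true]
    have h1 : (1:ℝ)/2 ≤ lamv j / (lamv j + lam) := by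
      rw [div_le_div_iff₀ two_pos hs]; linarith
    have h2 : (1:ℝ)/4 ≤ (lamv j / (lamv j + lam)) ^ 2 := by nlinarith
    have h3 : 0 ≤ (β j) ^ 2 * lamv j * lam ^ 2 / (lamv j + lam) ^ 2 :=
      div_nonneg (by positivity) (by positivity)
    nlinarith [mul_le_mul_of_nonneg_left h2 hσn]
  · simp only [h, if_false]
    push_neg at h
    have h1 : (1:ℝ)/2 ≤ lam / (lamv j + lam) := by
      rw [div_le_div_iff₀ two_pos hs]; linarith
    have h2 : (1:ℝ)/4 ≤ (lam / (lamv j + lam)) ^ 2 := by nlinarith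
    have key : lamv j * (β j) ^ 2 ≤ 4 * ((β j) ^ 2 * lamv j * lam ^ 2 / (lamv j + lam) ^ 2) := by
      have : (β j) ^ 2 * lamv j * lam ^ 2 / (lamv j + lam) ^ 2
          = ((β j) ^ 2 * lamv j) * (lam / (lamv j + lam)) ^ 2 := by
        field_simp
      rw [this]
      nlinarith [mul_le_mul_of_nonneg_left h2 (mul_nonneg hb ha.le)]
    nlinarith [mul_nonneg hσn (sq_nonneg (lamv j / (lamv j + lam)))]
end
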